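/- If D_n(3) \cap L contains a point that is not a degree sequence of a 3-uniform hypergraph on [n] (with the point lying in a face fixing one coordinate to 0 when extended), then D_{n+1}(3) \cap L also contains a point that is not a degree sequence: specifically, D_n(3) embedded as the vectors with last coordinate 0 is the face of D_{n+1}(3) maximizing the weight w = (0,...,0,-1), and the embedded point remains a non-degree-sequence lattice point of D_{n+1}(3). -/

import Mathlib

/-!
Sets of `[n + 1]` avoiding the last point are exactly the images of subsets of `[n]`, and
`e_{S}` extends by `0` along this embedding. Every point of `D_{n+1}(k)` has a nonnegative last
coordinate, so the points of `D_{n+1}(k)` maximizing `w` are those with last coordinate `0`;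
for such a point, and likewise for a degree sequence, every generator containing the last point
has coefficient `0`, so the point is the zero-extension of a point of `D_n(k)` (of a degree
sequence on `[n]`).
-/

open scoped Classical

/-- The indicator vector of a subset `S` of `[n]`. -/
noncomputable def eS (n : ℕ) (S : Finset (Fin n)) : Fin n → ℝ :=
  fun i => if i ∈ S then 1 else 0

/-- The zonotope `D_n(k)`, generated by the `e_S` over all `k`-subsets `S` of `[n]`. -/
noncomputable def D (n k : ℕ) : Set (Fin n → ℝ) :=
  {x | ∃ c : Finset (Fin n) → ℝ, (∀ S, 0 ≤ c S ∧ c S ≤ 1) ∧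
    x = ∑ S ∈ Finset.univ.powersetCard k, c S • eS n S}

/-- The dot product of two vectors. -/
noncomputable def dot (n : ℕ) (w x : Fin n → ℝ) : ℝ := ∑ i, w i * x i

/-- `x` is the degree sequence of a `3`-uniform hypergraph on `[n]`. -/
def IsDegSeq (n : ℕ) (x : Fin n → ℝ) : Prop :=
  ∃ K : Finset (Finset (Fin n)), (∀ S ∈ K, S.card = 3) ∧ x = ∑ S ∈ K, eS n S

open Finset

section

variable {n : ℕ}

lemma sum_smul_eS_apply (s : Finset (Finset (Fin n))) (c : Finset (Fin n) → ℝ) (i : Fin n) :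
    (∑ S ∈ s, c S • eS n S) i = ∑ S ∈ s with i ∈ S, c S := by
  simp [Finset.sum_apply, eS, Finset.sum_filter]

lemma eq_zero_of_sum_smul_eS_apply_eq_zero {s : Finset (Finset (Fin n))} {c : Finset (Fin n) → ℝ}
    (hc : ∀ S ∈ s, 0 ≤ c S) {i : Fin n} (h : (∑ S ∈ s, c S • eS n S) i = 0) :
    ∀ S ∈ s, i ∈ S → c S = 0 := by
  rw [sum_smul_eS_apply, sum_eq_zero_iff_of_nonneg fun S hS => hc S (mem_filter.1 hS).1] at h
  exact fun S hS hi => h S (mem_filter.2 ⟨hS, hi⟩)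

lemma eS_map_castSuccEmb (T : Finset (Fin n)) :
    eS (n + 1) (T.map Fin.castSuccEmb) = Fin.snoc (eS n T) 0 := by
  funext j
  induction j using Fin.lastCases with
  | last => simp [eS]
  | cast i => simp [eS]

lemma sum_smul_eS_map_castSuccEmb (s : Finset (Finset (Fin n))) (c : Finset (Fin n) → ℝ) :
    ∑ T ∈ s, c T • eS (n + 1) (T.map Fin.castSuccEmb) = Fin.snoc (∑ T ∈ s, c T • eS n T) 0 := by
  funext j
  induction j using Fin.lastCases with
  | last => simp [eS_map_castSuccEmb]
  | cast i => simp [eS_map_castSuccEmb]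

lemma filter_last_notMem_powersetCard (k : ℕ) :
    {S ∈ (univ : Finset (Fin (n + 1))).powersetCard k | Fin.last n ∉ S} =
      (univ.powersetCard k).map (mapEmbedding Fin.castSuccEmb).toEmbedding := by
  rw [← powersetCard_map, ← Fin.Iio_last_eq_map]
  ext S
  rw [mem_filter, mem_powersetCard_univ, mem_powersetCard, and_comm (a := S ⊆ _)]
  refine and_congr_right' ⟨fun h x hx => ?_, fun h hl => lt_irrefl _ (mem_Iio.1 (h hl))⟩
  exact mem_Iio.2 (Fin.lt_last_iff_ne_last.2 (ne_of_mem_of_not_mem hx h))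

lemma sum_powersetCard_smul_eS_eq_snoc {k : ℕ} {c : Finset (Fin (n + 1)) → ℝ}
    (hc : ∀ S ∈ univ.powersetCard k, Fin.last n ∈ S → c S = 0) :
    ∑ S ∈ univ.powersetCard k, c S • eS (n + 1) S =
      Fin.snoc (∑ T ∈ univ.powersetCard k, c (T.map Fin.castSuccEmb) • eS n T) 0 := by
  rw [← sum_filter_of_ne (p := fun S => Fin.last n ∉ S)
      fun S hS hS0 hl => hS0 (by rw [hc S hS hl, zero_smul]),
    filter_last_notMem_powersetCard, sum_map]
  exact sum_smul_eS_map_castSuccEmb _ _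

lemma zero_mem_D (n k : ℕ) : (0 : Fin n → ℝ) ∈ D n k :=
  ⟨0, fun _ => ⟨le_rfl, zero_le_one⟩, by simp⟩

lemma nonneg_of_mem_D {k : ℕ} {x : Fin n → ℝ} (hx : x ∈ D n k) (i : Fin n) : 0 ≤ x i := by
  obtain ⟨c, hc, rfl⟩ := hx
  rw [sum_smul_eS_apply]
  exact sum_nonneg fun S _ => (hc S).1

lemma snoc_zero_mem_D_iff {k : ℕ} {x : Fin n → ℝ} :
    (Fin.snoc x 0 : Fin (n + 1) → ℝ) ∈ D (n + 1) k ↔ x ∈ D n k := by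
  constructor
  · rintro ⟨c, hc, hx⟩
    have hlast : ∀ S ∈ univ.powersetCard k, Fin.last n ∈ S → c S = 0 :=
      eq_zero_of_sum_smul_eS_apply_eq_zero (fun S _ => (hc S).1) (by rw [← hx, Fin.snoc_last])
    rw [sum_powersetCard_smul_eS_eq_snoc hlast] at hx
    exact ⟨fun T => c (T.map Fin.castSuccEmb), fun T => hc _, (Fin.snoc_injective2 hx).1⟩
  · rintro ⟨c, hc, rfl⟩
    let c' : Finset (Fin (n + 1)) → ℝ := fun S =>
      if Fin.last n ∈ S then 0 else c {i | i.castSucc ∈ S}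
    have hc'_map (T : Finset (Fin n)) : c' (T.map Fin.castSuccEmb) = c T := by
      simp [c']
    refine ⟨c', fun S => ?_, ?_⟩
    · by_cases hS : Fin.last n ∈ S <;> simp [c', hS, hc]
    · rw [sum_powersetCard_smul_eS_eq_snoc (c := c') fun S _ hS => if_pos hS]
      simp only [hc'_map]

lemma dot_snoc_zero_neg_one (y : Fin (n + 1) → ℝ) :
    dot (n + 1) (Fin.snoc 0 (-1)) y = -y (Fin.last n) := by
  simp [dot, Fin.sum_univ_castSucc]

theorem setOf_isMaxOn_dot_D_eq_image_snoc (k : ℕ) :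
    {x | x ∈ D (n + 1) k ∧ ∀ y ∈ D (n + 1) k,
        dot (n + 1) (Fin.snoc 0 (-1)) y ≤ dot (n + 1) (Fin.snoc 0 (-1)) x} =
      (fun x : Fin n → ℝ => Fin.snoc x 0) '' D n k := by
  ext x
  simp only [Set.mem_ofPred_eq, Set.mem_image, dot_snoc_zero_neg_one, neg_le_neg_iff]
  constructor
  · rintro ⟨hx, hmin⟩
    have hlast : x (Fin.last n) = 0 :=
      le_antisymm (by simpa using hmin 0 (zero_mem_D _ _)) (nonneg_of_mem_D hx _)
    have hx_eq : Fin.snoc (Fin.init x) 0 = x := by rw [← hlast, Fin.snoc_init_self]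
    exact ⟨Fin.init x, snoc_zero_mem_D_iff.1 (by rwa [hx_eq]), hx_eq⟩
  · rintro ⟨y, hy, rfl⟩
    exact ⟨snoc_zero_mem_D_iff.2 hy, fun z hz => by simpa using nonneg_of_mem_D hz _⟩

lemma IsDegSeq.of_snoc_zero {x : Fin n → ℝ} (h : IsDegSeq (n + 1) (Fin.snoc x 0)) :
    IsDegSeq n x := by
  obtain ⟨K, hK, hx⟩ := h
  replace hx : Fin.snoc x 0 = ∑ S ∈ K, (1 : ℝ) • eS (n + 1) S := by simpa using hx
  have hlast : ∀ S ∈ K, Fin.last n ∉ S := fun S hS hl =>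
    one_ne_zero (eq_zero_of_sum_smul_eS_apply_eq_zero (fun _ _ => zero_le_one)
      (by rw [← hx, Fin.snoc_last]) S hS hl)
  have hK_sub : K ⊆ (univ.powersetCard 3).map (mapEmbedding Fin.castSuccEmb).toEmbedding := by
    rw [← filter_last_notMem_powersetCard]
    exact fun S hS => mem_filter.2 ⟨mem_powersetCard_univ.2 (hK S hS), hlast S hS⟩
  obtain ⟨K', hK', rfl⟩ := subset_map_iff.1 hK_sub
  rw [sum_map] at hx
  refine ⟨K', fun T hT => mem_powersetCard_univ.1 (hK' hT), ?_⟩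
  simpa using (Fin.snoc_injective2 (hx.trans (sum_smul_eS_map_castSuccEmb K' 1))).1

end

/-- If `p` is a lattice point of `D_n(3)` that is not a degree sequence, then its extension
by a zero coordinate is a lattice point of `D_{n+1}(3)` that is not a degree sequence;
moreover the copy of `D_n(3)` with last coordinate `0` is exactly the face of `D_{n+1}(3)`
maximizing the weight `w = (0,…,0,-1)`. -/
theorem extend_non_degree_sequence (n : ℕ) (p : Fin n → ℝ)
    (hD : p ∈ D n 3) (hint : ∀ i, ∃ z : ℤ, p i = z) (hsum : ∃ z : ℤ, ∑ i, p i = 3 * z)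
    (hnd : ¬ IsDegSeq n p) :
    ({x | x ∈ D (n + 1) 3 ∧ ∀ y ∈ D (n + 1) 3,
        dot (n + 1) (Fin.snoc 0 (-1)) y ≤ dot (n + 1) (Fin.snoc 0 (-1)) x} =
      (fun x : Fin n → ℝ => Fin.snoc x 0) '' D n 3) ∧
    (Fin.snoc p 0 : Fin (n + 1) → ℝ) ∈ D (n + 1) 3 ∧
    (∀ i, ∃ z : ℤ, (Fin.snoc p 0 : Fin (n + 1) → ℝ) i = z) ∧
    (∃ z : ℤ, ∑ i, (Fin.snoc p 0 : Fin (n + 1) → ℝ) i = 3 * z) ∧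
    ¬ IsDegSeq (n + 1) (Fin.snoc p 0) := by
  refine ⟨setOf_isMaxOn_dot_D_eq_image_snoc 3, snoc_zero_mem_D_iff.2 hD, fun i => ?_, ?_,
    fun h => hnd h.of_snoc_zero⟩
  · induction i using Fin.lastCases with
    | last => exact ⟨0, by simp⟩
    | cast i => simpa using hint i
  · obtain ⟨z, hz⟩ := hsum
    exact ⟨z, by simp [Fin.sum_univ_castSucc, hz]⟩
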